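/- arXiv:1808.05185 — 4 statements merged into one kernel-verified Lean document; each statement's English description precedes it below -/
import Mathlib

section
/- Let A be the size of a random hyperedge under the LCA model with parameters (π, p) and B be the size under the ELCA model with parameters (π, τ, a, φ) on the same N vertices. If p_{ig} = φ_{ig} Σ_{k=1}^K a_k τ_k for all i and g, then E(A) = E(B) and Var(A) ≤ Var(B). -/
open MeasureTheory ProbabilityTheory

private lemma measure_partition' {Ω α : Type*} [MeasurableSpace Ω] [Fintype α]
    (μ : Measure Ω) [IsFiniteMeasure μ] (t : α → Set Ω) (ht : ∀ g, MeasurableSet (t g))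
    (hdisj : Pairwise (Function.onFun Disjoint t)) (hcov : ∀ ω, ∃ g, ω ∈ t g)
    (s : Set Ω) (hs : MeasurableSet s) :
    (μ s).toReal = ∑ g, (μ (s ∩ t g)).toReal := by
  have h1 : s = ⋃ g : α, s ∩ t g := by
    ext ω
    simp only [Set.mem_iUnion, Set.mem_inter_iff]
    exact ⟨fun hω => (hcov ω).imp fun g hg => ⟨hω, hg⟩, fun ⟨g, hg, _⟩ => hg⟩
  have h2 : μ s = ∑ g : α, μ (s ∩ t g) := by
    conv_lhs => rw [h1]
    rw [measure_iUnion (fun g g' hne => ((hdisj hne).mono Set.inter_subset_right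
      Set.inter_subset_right)) (fun g => hs.inter (ht g)), tsum_fintype]
  rw [h2, ENNReal.toReal_sum (fun g _ => measure_ne_top μ _)]

private lemma integral_bool' {Ω : Type*} [MeasurableSpace Ω] (μ : Measure Ω) [IsFiniteMeasure μ]
    (f : Ω → ℝ) (hf : Measurable f) (h01 : ∀ ω, f ω = 0 ∨ f ω = 1) :
    ∫ ω, f ω ∂μ = (μ {ω | f ω = 1}).toReal := by
  have hset : MeasurableSet {ω | f ω = 1} := hf (measurableSet_singleton 1)
  have hfi : f = Set.indicator {ω | f ω = 1} (fun _ => (1:ℝ)) := by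
    funext ω
    rcases h01 ω with h | h
    · rw [Set.indicator_of_notMem (by simp [h]), h]
    · rw [Set.indicator_of_mem (show ω ∈ {ω | f ω = 1} from h), h]
  conv_lhs => rw [hfi]
  rw [integral_indicator_const _ hset, smul_eq_mul, mul_one]
  rfl

private lemma integrable_bool' {Ω : Type*} [MeasurableSpace Ω] (μ : Measure Ω) [IsFiniteMeasure μ]
    (f : Ω → ℝ) (hf : Measurable f) (h01 : ∀ ω, f ω = 0 ∨ f ω = 1) :
    Integrable f μ := by
  refine memLp_one_iff_integrable.mp (memLp_of_bounded (a := 0) (b := 1)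
    (ae_of_all _ fun ω => ?_) hf.aestronglyMeasurable 1)
  rcases h01 ω with h | h <;> simp [h]

private lemma cauchy_schwarz_tau {K : ℕ} (τ a : Fin K → ℝ) (hτ0 : ∀ k, 0 ≤ τ k)
    (hτ1 : ∑ k, τ k = 1) : (∑ k, a k * τ k) ^ 2 ≤ ∑ k, a k ^ 2 * τ k := by
  have h := Finset.sum_mul_sq_le_sq_mul_sq Finset.univ
    (fun k => Real.sqrt (τ k) * a k) (fun k => Real.sqrt (τ k))
  have e1 : ∀ k : Fin K, (Real.sqrt (τ k) * a k) * Real.sqrt (τ k) = a k * τ k := by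
    intro k
    rw [mul_comm (Real.sqrt (τ k)) (a k), mul_assoc, Real.mul_self_sqrt (hτ0 k)]
  have e2 : ∀ k : Fin K, (Real.sqrt (τ k) * a k) ^ 2 = a k ^ 2 * τ k := by
    intro k
    rw [mul_pow, Real.sq_sqrt (hτ0 k)]
    ring
  have e3 : ∀ k : Fin K, (Real.sqrt (τ k)) ^ 2 = τ k := fun k => Real.sq_sqrt (hτ0 k)
  calc (∑ k, a k * τ k) ^ 2 = (∑ k, (Real.sqrt (τ k) * a k) * Real.sqrt (τ k)) ^ 2 := by
        rw [Finset.sum_congr rfl fun k _ => (e1 k)]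
    _ ≤ (∑ k, (Real.sqrt (τ k) * a k) ^ 2) * (∑ k, (Real.sqrt (τ k)) ^ 2) := h
    _ = (∑ k, a k ^ 2 * τ k) * 1 := by
        rw [Finset.sum_congr rfl fun k _ => (e2 k), Finset.sum_congr rfl fun k _ => (e3 k), hτ1]
    _ = ∑ k, a k ^ 2 * τ k := mul_one _

/-- Proposition 1: under the matching condition p_{ig} = φ_{ig} Σ_k a_k τ_k,
the LCA and ELCA hyperedge sizes have the same mean and Var(A) ≤ Var(B). -/
theorem lca_elca_mean_var_comparison {N G K : ℕ}
    {Ω₁ Ω₂ : Type*} [MeasurableSpace Ω₁] [MeasurableSpace Ω₂]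
    (μ₁ : Measure Ω₁) [IsProbabilityMeasure μ₁]
    (μ₂ : Measure Ω₂) [IsProbabilityMeasure μ₂]
    (Z : Ω₁ → Fin G) (A : Fin N → Ω₁ → ℝ)
    (Z₁ : Ω₂ → Fin G) (Z₂ : Ω₂ → Fin K) (B : Fin N → Ω₂ → ℝ)
    (π : Fin G → ℝ) (τ : Fin K → ℝ) (a : Fin K → ℝ)
    (p : Fin N → Fin G → ℝ) (φ : Fin N → Fin G → ℝ)
    (hπ0 : ∀ g, 0 ≤ π g) (hπ1 : ∑ g, π g = 1)
    (hτ0 : ∀ k, 0 ≤ τ k) (hτ1 : ∑ k, τ k = 1)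
    (ha : ∀ k, 0 < a k ∧ a k ≤ 1) (hφ : ∀ i g, 0 ≤ φ i g ∧ φ i g ≤ 1)
    (hmatch : ∀ i g, p i g = φ i g * ∑ k, a k * τ k)
    (hZmeas : Measurable Z) (hAmeas : ∀ i, Measurable (A i))
    (hA01 : ∀ i ω, A i ω = 0 ∨ A i ω = 1)
    (hπA : ∀ g, (μ₁ {ω | Z ω = g}).toReal = π g)
    (hcondA : ∀ i g, (μ₁ ({ω | A i ω = 1} ∩ {ω | Z ω = g})).toReal = p i g * π g)
    (hpairA : ∀ i j g, i ≠ j →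
      (μ₁ ({ω | A i ω = 1} ∩ {ω | A j ω = 1} ∩ {ω | Z ω = g})).toReal
        = p i g * p j g * π g)
    (hZ₁meas : Measurable Z₁) (hZ₂meas : Measurable Z₂) (hBmeas : ∀ i, Measurable (B i))
    (hB01 : ∀ i ω, B i ω = 0 ∨ B i ω = 1)
    (hπB : ∀ g k, (μ₂ ({ω | Z₁ ω = g} ∩ {ω | Z₂ ω = k})).toReal = π g * τ k)
    (hcondB : ∀ i g k,
      (μ₂ ({ω | B i ω = 1} ∩ {ω | Z₁ ω = g} ∩ {ω | Z₂ ω = k})).toReal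
        = a k * φ i g * (π g * τ k))
    (hpairB : ∀ i j g k, i ≠ j →
      (μ₂ ({ω | B i ω = 1} ∩ {ω | B j ω = 1} ∩ {ω | Z₁ ω = g} ∩ {ω | Z₂ ω = k})).toReal
        = (a k) ^ 2 * φ i g * φ j g * (π g * τ k)) :
    (∫ ω, (∑ i, A i ω) ∂μ₁ = ∫ ω, (∑ i, B i ω) ∂μ₂) ∧
      variance (fun ω => ∑ i, A i ω) μ₁ ≤ variance (fun ω => ∑ i, B i ω) μ₂ := by
  classical
  -- measurability of basic sets
  have hmA : ∀ i, MeasurableSet {ω | A i ω = 1} := fun i => (hAmeas i) (measurableSet_singleton 1)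
  have hmB : ∀ i, MeasurableSet {ω | B i ω = 1} := fun i => (hBmeas i) (measurableSet_singleton 1)
  have hmZ : ∀ g, MeasurableSet {ω | Z ω = g} := fun g => hZmeas (measurableSet_singleton g)
  -- partition of Ω₁ by the latent class
  have hdisjZ : Pairwise (Function.onFun Disjoint (fun g : Fin G => {ω | Z ω = g})) := by
    intro g g' hne
    simp only [Function.onFun, Set.disjoint_left, Set.mem_setOf_eq]
    intro ω hg hg'
    exact hne (hg.symm.trans hg')
  have partA : ∀ s : Set Ω₁, MeasurableSet s →
      (μ₁ s).toReal = ∑ g, (μ₁ (s ∩ {ω | Z ω = g})).toReal :=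
    fun s hs => measure_partition' μ₁ _ hmZ hdisjZ (fun ω => ⟨Z ω, rfl⟩) s hs
  -- partition of Ω₂ by the pair of latent classes
  have hmtB : ∀ gk : Fin G × Fin K,
      MeasurableSet ({ω | Z₁ ω = gk.1} ∩ {ω | Z₂ ω = gk.2}) := fun gk =>
    (hZ₁meas (measurableSet_singleton gk.1)).inter (hZ₂meas (measurableSet_singleton gk.2))
  have hdisjB : Pairwise (Function.onFun Disjoint
      (fun gk : Fin G × Fin K => {ω | Z₁ ω = gk.1} ∩ {ω | Z₂ ω = gk.2})) := by
    intro gk gk' hne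
    simp only [Function.onFun, Set.disjoint_left, Set.mem_inter_iff, Set.mem_setOf_eq]
    rintro ω ⟨h1, h2⟩ ⟨h3, h4⟩
    exact hne (Prod.ext (h1.symm.trans h3) (h2.symm.trans h4))
  have partB : ∀ s : Set Ω₂, MeasurableSet s →
      (μ₂ s).toReal
        = ∑ gk : Fin G × Fin K, (μ₂ (s ∩ ({ω | Z₁ ω = gk.1} ∩ {ω | Z₂ ω = gk.2}))).toReal :=
    fun s hs => measure_partition' μ₂ _ hmtB hdisjB (fun ω => ⟨(Z₁ ω, Z₂ ω), rfl, rfl⟩) s hs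
  -- expectations of single terms
  have hEA : ∀ i, ∫ ω, A i ω ∂μ₁ = ∑ g, p i g * π g := by
    intro i
    rw [integral_bool' μ₁ _ (hAmeas i) (hA01 i), partA _ (hmA i)]
    exact Finset.sum_congr rfl fun g _ => hcondA i g
  have hEB : ∀ i, ∫ ω, B i ω ∂μ₂ = ∑ g, p i g * π g := by
    intro i
    rw [integral_bool' μ₂ _ (hBmeas i) (hB01 i), partB _ (hmB i)]
    have step : ∀ gk : Fin G × Fin K,
        (μ₂ ({ω | B i ω = 1} ∩ ({ω | Z₁ ω = gk.1} ∩ {ω | Z₂ ω = gk.2}))).toReal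
          = a gk.2 * φ i gk.1 * (π gk.1 * τ gk.2) := by
      intro gk
      rw [← Set.inter_assoc]
      exact hcondB i gk.1 gk.2
    rw [Finset.sum_congr rfl fun gk _ => step gk, Fintype.sum_prod_type]
    refine Finset.sum_congr rfl fun g _ => ?_
    calc ∑ k, a k * φ i g * (π g * τ k) = ∑ k, (φ i g * π g) * (a k * τ k) :=
          Finset.sum_congr rfl fun k _ => by ring
      _ = (φ i g * π g) * ∑ k, a k * τ k := by rw [← Finset.mul_sum]
      _ = p i g * π g := by rw [hmatch i g]; ring
  -- 0/1 products
  have hA01p : ∀ i j (ω : Ω₁), A i ω * A j ω = 0 ∨ A i ω * A j ω = 1 := by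
    intro i j ω
    rcases hA01 i ω with h | h <;> rcases hA01 j ω with h' | h' <;> simp [h, h']
  have hB01p : ∀ i j (ω : Ω₂), B i ω * B j ω = 0 ∨ B i ω * B j ω = 1 := by
    intro i j ω
    rcases hB01 i ω with h | h <;> rcases hB01 j ω with h' | h' <;> simp [h, h']
  have hsetAp : ∀ i j, {ω | A i ω * A j ω = 1} = {ω | A i ω = 1} ∩ {ω | A j ω = 1} := by
    intro i j
    ext ω
    simp only [Set.mem_setOf_eq, Set.mem_inter_iff]
    constructor
    · intro h
      rcases hA01 i ω with h1 | h1 <;> rcases hA01 j ω with h2 | h2 <;>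
        simp [h1, h2] at h ⊢
    · rintro ⟨h1, h2⟩
      rw [h1, h2, mul_one]
  have hsetBp : ∀ i j, {ω | B i ω * B j ω = 1} = {ω | B i ω = 1} ∩ {ω | B j ω = 1} := by
    intro i j
    ext ω
    simp only [Set.mem_setOf_eq, Set.mem_inter_iff]
    constructor
    · intro h
      rcases hB01 i ω with h1 | h1 <;> rcases hB01 j ω with h2 | h2 <;>
        simp [h1, h2] at h ⊢
    · rintro ⟨h1, h2⟩
      rw [h1, h2, mul_one]
  -- pair expectations
  have hEApair : ∀ i j, i ≠ j → ∫ ω, A i ω * A j ω ∂μ₁ = ∑ g, p i g * p j g * π g := by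
    intro i j hij
    rw [integral_bool' μ₁ (fun ω => A i ω * A j ω) ((hAmeas i).mul (hAmeas j)) (hA01p i j), hsetAp i j,
      partA _ ((hmA i).inter (hmA j))]
    exact Finset.sum_congr rfl fun g _ => hpairA i j g hij
  have hEBpair : ∀ i j, i ≠ j → ∫ ω, B i ω * B j ω ∂μ₂
      = ∑ g, (∑ k, a k ^ 2 * τ k) * (φ i g * φ j g * π g) := by
    intro i j hij
    rw [integral_bool' μ₂ (fun ω => B i ω * B j ω) ((hBmeas i).mul (hBmeas j)) (hB01p i j), hsetBp i j,
      partB _ ((hmB i).inter (hmB j))]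
    have step : ∀ gk : Fin G × Fin K,
        (μ₂ ({ω | B i ω = 1} ∩ {ω | B j ω = 1} ∩ ({ω | Z₁ ω = gk.1} ∩ {ω | Z₂ ω = gk.2}))).toReal
          = a gk.2 ^ 2 * φ i gk.1 * φ j gk.1 * (π gk.1 * τ gk.2) := by
      intro gk
      rw [← Set.inter_assoc]
      exact hpairB i j gk.1 gk.2 hij
    rw [Finset.sum_congr rfl fun gk _ => step gk, Fintype.sum_prod_type]
    refine Finset.sum_congr rfl fun g _ => ?_
    calc ∑ k, a k ^ 2 * φ i g * φ j g * (π g * τ k)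
        = ∑ k, (φ i g * φ j g * π g) * (a k ^ 2 * τ k) :=
          Finset.sum_congr rfl fun k _ => by ring
      _ = (φ i g * φ j g * π g) * ∑ k, a k ^ 2 * τ k := by rw [← Finset.mul_sum]
      _ = (∑ k, a k ^ 2 * τ k) * (φ i g * φ j g * π g) := mul_comm _ _
  -- integrability
  have hIntA : ∀ i, Integrable (A i) μ₁ := fun i => integrable_bool' μ₁ _ (hAmeas i) (hA01 i)
  have hIntB : ∀ i, Integrable (B i) μ₂ := fun i => integrable_bool' μ₂ _ (hBmeas i) (hB01 i)
  have hIntAA : ∀ i j, Integrable (fun ω => A i ω * A j ω) μ₁ := fun i j =>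
    integrable_bool' μ₁ _ ((hAmeas i).mul (hAmeas j)) (hA01p i j)
  have hIntBB : ∀ i j, Integrable (fun ω => B i ω * B j ω) μ₂ := fun i j =>
    integrable_bool' μ₂ _ ((hBmeas i).mul (hBmeas j)) (hB01p i j)
  -- means
  have hmeanA : ∫ ω, (∑ i, A i ω) ∂μ₁ = ∑ i, ∑ g, p i g * π g := by
    rw [integral_finset_sum _ fun i _ => hIntA i]
    exact Finset.sum_congr rfl fun i _ => hEA i
  have hmeanB : ∫ ω, (∑ i, B i ω) ∂μ₂ = ∑ i, ∑ g, p i g * π g := by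
    rw [integral_finset_sum _ fun i _ => hIntB i]
    exact Finset.sum_congr rfl fun i _ => hEB i
  -- second moments
  have hsqA : ∫ ω, (∑ i, A i ω) ^ 2 ∂μ₁ = ∑ i, ∑ j, ∫ ω, A i ω * A j ω ∂μ₁ := by
    have e : ∀ ω : Ω₁, (∑ i, A i ω) ^ 2 = ∑ i, ∑ j, A i ω * A j ω := by
      intro ω
      rw [sq, Finset.sum_mul_sum]
    simp_rw [e]
    rw [integral_finset_sum _ fun i _ => integrable_finset_sum _ fun j _ => hIntAA i j]
    exact Finset.sum_congr rfl fun i _ => integral_finset_sum _ fun j _ => hIntAA i j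
  have hsqB : ∫ ω, (∑ i, B i ω) ^ 2 ∂μ₂ = ∑ i, ∑ j, ∫ ω, B i ω * B j ω ∂μ₂ := by
    have e : ∀ ω : Ω₂, (∑ i, B i ω) ^ 2 = ∑ i, ∑ j, B i ω * B j ω := by
      intro ω
      rw [sq, Finset.sum_mul_sum]
    simp_rw [e]
    rw [integral_finset_sum _ fun i _ => integrable_finset_sum _ fun j _ => hIntBB i j]
    exact Finset.sum_congr rfl fun i _ => integral_finset_sum _ fun j _ => hIntBB i j
  -- Memℒp 2
  have hMA : MemLp (fun ω => ∑ i, A i ω) 2 μ₁ := by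
    refine memLp_of_bounded (a := 0) (b := N) (ae_of_all _ fun ω => ⟨?_, ?_⟩)
      ((Finset.measurable_sum _ fun i _ => hAmeas i).aestronglyMeasurable) 2
    · exact Finset.sum_nonneg fun i _ => by rcases hA01 i ω with h | h <;> simp [h]
    · calc ∑ i, A i ω ≤ ∑ _i : Fin N, (1:ℝ) :=
            Finset.sum_le_sum fun i _ => by rcases hA01 i ω with h | h <;> simp [h]
        _ = N := by simp
  have hMB : MemLp (fun ω => ∑ i, B i ω) 2 μ₂ := by
    refine memLp_of_bounded (a := 0) (b := N) (ae_of_all _ fun ω => ⟨?_, ?_⟩)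
      ((Finset.measurable_sum _ fun i _ => hBmeas i).aestronglyMeasurable) 2
    · exact Finset.sum_nonneg fun i _ => by rcases hB01 i ω with h | h <;> simp [h]
    · calc ∑ i, B i ω ≤ ∑ _i : Fin N, (1:ℝ) :=
            Finset.sum_le_sum fun i _ => by rcases hB01 i ω with h | h <;> simp [h]
        _ = N := by simp
  -- variance formulas
  have hvarA : variance (fun ω => ∑ i, A i ω) μ₁
      = (∑ i, ∑ j, ∫ ω, A i ω * A j ω ∂μ₁) - (∑ i, ∑ g, p i g * π g) ^ 2 := by
    rw [variance_eq_sub hMA]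
    simp only [Pi.pow_apply]
    rw [hsqA, hmeanA]
  have hvarB : variance (fun ω => ∑ i, B i ω) μ₂
      = (∑ i, ∑ j, ∫ ω, B i ω * B j ω ∂μ₂) - (∑ i, ∑ g, p i g * π g) ^ 2 := by
    rw [variance_eq_sub hMB]
    simp only [Pi.pow_apply]
    rw [hsqB, hmeanB]
  -- pairwise comparison of second-moment terms
  have key : ∀ i j, ∫ ω, A i ω * A j ω ∂μ₁ ≤ ∫ ω, B i ω * B j ω ∂μ₂ := by
    intro i j
    by_cases hij : i = j
    · subst hij
      have eA : (fun ω => A i ω * A i ω) = A i := by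
        funext ω
        rcases hA01 i ω with h | h <;> simp [h]
      have eB : (fun ω => B i ω * B i ω) = B i := by
        funext ω
        rcases hB01 i ω with h | h <;> simp [h]
      rw [show (∫ ω, A i ω * A i ω ∂μ₁) = ∫ ω, A i ω ∂μ₁ from congrArg _ eA,
        show (∫ ω, B i ω * B i ω ∂μ₂) = ∫ ω, B i ω ∂μ₂ from congrArg _ eB,
        hEA i, hEB i]
    · rw [hEApair i j hij, hEBpair i j hij]
      refine Finset.sum_le_sum fun g _ => ?_
      have hφπ : 0 ≤ φ i g * φ j g * π g :=
        mul_nonneg (mul_nonneg (hφ i g).1 (hφ j g).1) (hπ0 g)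
      have hpp : p i g * p j g * π g = (∑ k, a k * τ k) ^ 2 * (φ i g * φ j g * π g) := by
        rw [hmatch i g, hmatch j g]
        ring
      rw [hpp]
      exact mul_le_mul_of_nonneg_right (cauchy_schwarz_tau τ a hτ0 hτ1) hφπ
  refine ⟨by rw [hmeanA, hmeanB], ?_⟩
  rw [hvarA, hvarB]
  exact sub_le_sub_right
    (Finset.sum_le_sum fun i _ => Finset.sum_le_sum fun j _ => key i j) _
end

section
/- Under the matching condition p_{ig} = φ_{ig} Σ_k a_k τ_k, the difference Var(B) − Var(A) equals 2 Σ_{i<j} Σ_{g=1}^G φ_{ig} φ_{jg} (Σ_{k=1}^K a_k² τ_k − (Σ_{k=1}^K a_k τ_k)²) π_g. -/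
open MeasureTheory ProbabilityTheory Finset

/-!
Both hyperedge sizes are sums of Bernoulli indicators, so each variance is the sum of all
covariances `cov[X i, X j]`. The matching condition makes every vertex equally likely to be
included under both models, so the diagonal terms `E[X i] - E[X i]²` and the products of means
cancel, leaving the off-diagonal second moments. Conditioning on the latent classes gives
`E[B i B j] - E[A i A j] = Σ_g φ_ig φ_jg (Σ_k a_k² τ_k - (Σ_k a_k τ_k)²) π_g`.
-/

theorem sum_sum_eq_two_mul_sum_sum_Ioi {ι R : Type*} [Fintype ι] [LinearOrder ι]
    [LocallyFiniteOrderTop ι] [LocallyFiniteOrderBot ι] [Semiring R]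
    {f : ι → ι → R} (hsymm : ∀ i j, f i j = f j i) (hdiag : ∀ i, f i i = 0) :
    ∑ i, ∑ j, f i j = 2 * ∑ i, ∑ j ∈ Ioi i, f i j := by
  have hoff : ∀ i, ∑ j, f i j = ∑ j ∈ {i}ᶜ, f j i := fun i => by
    rw [Fintype.sum_eq_add_sum_compl i, hdiag, zero_add]
    exact sum_congr rfl fun j _ => hsymm i j
  rw [sum_congr rfl fun i _ => hoff i, ← sum_sum_Ioi_add_eq_sum_sum_off_diag, mul_sum]
  refine sum_congr rfl fun i _ => ?_
  rw [mul_sum]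
  exact sum_congr rfl fun j _ => by rw [hsymm j i, two_mul]

section ZeroOne

variable {Ω : Type*} {X Y : Ω → ℝ}

theorem eq_indicator_one_of_zero_or_one (hX : ∀ ω, X ω = 0 ∨ X ω = 1) :
    X = {ω | X ω = 1}.indicator 1 := by
  funext ω
  rcases hX ω with h | h <;> simp [h]

variable [MeasurableSpace Ω] {μ : Measure Ω}

theorem memLp_of_zero_or_one [IsFiniteMeasure μ] (hXm : Measurable X)
    (hX : ∀ ω, X ω = 0 ∨ X ω = 1) (p : ENNReal) : MemLp X p μ := by
  rw [eq_indicator_one_of_zero_or_one hX]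
  exact (memLp_const 1).indicator (hXm (measurableSet_singleton 1))

theorem integral_eq_measureReal_of_zero_or_one (hXm : Measurable X)
    (hX : ∀ ω, X ω = 0 ∨ X ω = 1) : μ[X] = μ.real {ω | X ω = 1} := by
  conv_lhs => rw [eq_indicator_one_of_zero_or_one hX]
  exact integral_indicator_one (hXm (measurableSet_singleton 1))

theorem integral_mul_eq_measureReal_inter_of_zero_or_one (hXm : Measurable X)
    (hYm : Measurable Y) (hX : ∀ ω, X ω = 0 ∨ X ω = 1) (hY : ∀ ω, Y ω = 0 ∨ Y ω = 1) :
    μ[X * Y] = μ.real ({ω | X ω = 1} ∩ {ω | Y ω = 1}) := by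
  conv_lhs => rw [eq_indicator_one_of_zero_or_one hX, eq_indicator_one_of_zero_or_one hY,
    ← Set.inter_indicator_one]
  exact integral_indicator_one
    ((hXm (measurableSet_singleton 1)).inter (hYm (measurableSet_singleton 1)))

theorem covariance_self_of_zero_or_one [IsProbabilityMeasure μ] (hXm : Measurable X)
    (hX : ∀ ω, X ω = 0 ∨ X ω = 1) : cov[X, X; μ] = μ[X] - μ[X] ^ 2 := by
  have hXX : X * X = X := by
    funext ω
    rcases hX ω with h | h <;> simp [h]
  have hL2 := memLp_of_zero_or_one (μ := μ) hXm hX 2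
  rw [covariance_eq_sub hL2 hL2, hXX, sq]

end ZeroOne

theorem variance_sum_sub_variance_sum_of_zero_or_one {Ω₁ Ω₂ ι : Type*}
    [MeasurableSpace Ω₁] [MeasurableSpace Ω₂] {μ₁ : Measure Ω₁} {μ₂ : Measure Ω₂}
    [IsProbabilityMeasure μ₁] [IsProbabilityMeasure μ₂] [Fintype ι] [LinearOrder ι]
    [LocallyFiniteOrderTop ι] [LocallyFiniteOrderBot ι] {X : ι → Ω₁ → ℝ} {Y : ι → Ω₂ → ℝ}
    (hXm : ∀ i, Measurable (X i)) (hYm : ∀ i, Measurable (Y i))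
    (hX : ∀ i ω, X i ω = 0 ∨ X i ω = 1) (hY : ∀ i ω, Y i ω = 0 ∨ Y i ω = 1)
    (hmean : ∀ i, μ₂[Y i] = μ₁[X i]) :
    Var[fun ω => ∑ i, Y i ω; μ₂] - Var[fun ω => ∑ i, X i ω; μ₁]
      = 2 * ∑ i, ∑ j ∈ Ioi i, (μ₂[Y i * Y j] - μ₁[X i * X j]) := by
  have hL2X := fun i => memLp_of_zero_or_one (μ := μ₁) (hXm i) (hX i) 2
  have hL2Y := fun i => memLp_of_zero_or_one (μ := μ₂) (hYm i) (hY i) 2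
  have hdiag : ∀ i, cov[Y i, Y i; μ₂] - cov[X i, X i; μ₁] = 0 := fun i => by
    rw [covariance_self_of_zero_or_one (hYm i) (hY i),
      covariance_self_of_zero_or_one (hXm i) (hX i), hmean i, sub_self]
  have hoff : ∀ i j, cov[Y i, Y j; μ₂] - cov[X i, X j; μ₁] = μ₂[Y i * Y j] - μ₁[X i * X j] :=
    fun i j => by
      rw [covariance_eq_sub (hL2Y i) (hL2Y j), covariance_eq_sub (hL2X i) (hL2X j), hmean i,
        hmean j, sub_sub_sub_cancel_right]
  rw [variance_fun_sum' fun i _ => hL2Y i, variance_fun_sum' fun i _ => hL2X i]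
  simp only [← sum_sub_distrib]
  rw [sum_sum_eq_two_mul_sum_sum_Ioi
    (fun i j => by rw [covariance_comm, covariance_comm (X i)]) hdiag]
  simp only [hoff]

section Partition

variable {Ω : Type*} [MeasurableSpace Ω] {μ : Measure Ω} [IsFiniteMeasure μ]
  {ι κ : Type*} [Fintype ι] [MeasurableSpace ι] [MeasurableSingletonClass ι]
  [Fintype κ] [MeasurableSpace κ] [MeasurableSingletonClass κ]

theorem measureReal_eq_sum_inter_fiber {Z : Ω → ι} (hZ : Measurable Z) (S : Set Ω) :
    μ.real S = ∑ g, μ.real (S ∩ {ω | Z ω = g}) := by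
  have hfib : ∀ g, MeasurableSet (Z ⁻¹' {g}) := fun g => hZ (measurableSet_singleton g)
  calc μ.real S = (μ.restrict S).real (Z ⁻¹' (univ : Finset ι)) := by
        rw [coe_univ, Set.preimage_univ, measureReal_restrict_apply MeasurableSet.univ,
          Set.univ_inter]
    _ = ∑ g, (μ.restrict S).real (Z ⁻¹' {g}) :=
        (sum_measureReal_preimage_singleton univ fun g _ => hfib g).symm
    _ = ∑ g, μ.real (S ∩ {ω | Z ω = g}) :=
        sum_congr rfl fun g _ => by rw [measureReal_restrict_apply (hfib g), Set.inter_comm]; rfl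

theorem measureReal_eq_sum_sum_inter_fiber {Z₁ : Ω → ι} {Z₂ : Ω → κ} (hZ₁ : Measurable Z₁)
    (hZ₂ : Measurable Z₂) (S : Set Ω) :
    μ.real S = ∑ g, ∑ k, μ.real (S ∩ {ω | Z₁ ω = g} ∩ {ω | Z₂ ω = k}) := by
  rw [measureReal_eq_sum_inter_fiber hZ₁]
  exact sum_congr rfl fun g _ => measureReal_eq_sum_inter_fiber hZ₂ _

end Partition

theorem lca_elca_variance_difference_general {N G K : ℕ}
    {Ω₁ Ω₂ : Type*} [MeasurableSpace Ω₁] [MeasurableSpace Ω₂]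
    (μ₁ : Measure Ω₁) [IsProbabilityMeasure μ₁]
    (μ₂ : Measure Ω₂) [IsProbabilityMeasure μ₂]
    (Z : Ω₁ → Fin G) (A : Fin N → Ω₁ → ℝ)
    (Z₁ : Ω₂ → Fin G) (Z₂ : Ω₂ → Fin K) (B : Fin N → Ω₂ → ℝ)
    (π : Fin G → ℝ) (τ : Fin K → ℝ) (a : Fin K → ℝ)
    (p : Fin N → Fin G → ℝ) (φ : Fin N → Fin G → ℝ)
    (hmatch : ∀ i g, p i g = φ i g * ∑ k, a k * τ k)
    (hZmeas : Measurable Z) (hAmeas : ∀ i, Measurable (A i))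
    (hA01 : ∀ i ω, A i ω = 0 ∨ A i ω = 1)
    (hcondA : ∀ i g, (μ₁ ({ω | A i ω = 1} ∩ {ω | Z ω = g})).toReal = p i g * π g)
    (hpairA : ∀ i j g, i ≠ j →
      (μ₁ ({ω | A i ω = 1} ∩ {ω | A j ω = 1} ∩ {ω | Z ω = g})).toReal
        = p i g * p j g * π g)
    (hZ₁meas : Measurable Z₁) (hZ₂meas : Measurable Z₂) (hBmeas : ∀ i, Measurable (B i))
    (hB01 : ∀ i ω, B i ω = 0 ∨ B i ω = 1)
    (hcondB : ∀ i g k,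
      (μ₂ ({ω | B i ω = 1} ∩ {ω | Z₁ ω = g} ∩ {ω | Z₂ ω = k})).toReal
        = a k * φ i g * (π g * τ k))
    (hpairB : ∀ i j g k, i ≠ j →
      (μ₂ ({ω | B i ω = 1} ∩ {ω | B j ω = 1} ∩ {ω | Z₁ ω = g} ∩ {ω | Z₂ ω = k})).toReal
        = (a k) ^ 2 * φ i g * φ j g * (π g * τ k)) :
    variance (fun ω => ∑ i, B i ω) μ₂ - variance (fun ω => ∑ i, A i ω) μ₁
      = 2 * ∑ i, ∑ j ∈ Finset.univ.filter (fun j => i < j), ∑ g,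
          φ i g * φ j g * (∑ k, (a k) ^ 2 * τ k - (∑ k, a k * τ k) ^ 2) * π g := by
  have hmean : ∀ i, μ₂[B i] = μ₁[A i] := fun i => by
    rw [integral_eq_measureReal_of_zero_or_one (hBmeas i) (hB01 i),
      integral_eq_measureReal_of_zero_or_one (hAmeas i) (hA01 i),
      measureReal_eq_sum_sum_inter_fiber hZ₁meas hZ₂meas, measureReal_eq_sum_inter_fiber hZmeas]
    simp only [measureReal_def, hcondA, hcondB, hmatch, mul_sum, sum_mul]
    exact sum_congr rfl fun g _ => sum_congr rfl fun k _ => by ring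
  have hsecond : ∀ i j, i ≠ j → μ₂[B i * B j] - μ₁[A i * A j]
      = ∑ g, φ i g * φ j g * (∑ k, (a k) ^ 2 * τ k - (∑ k, a k * τ k) ^ 2) * π g := by
    intro i j hij
    rw [integral_mul_eq_measureReal_inter_of_zero_or_one (hBmeas i) (hBmeas j) (hB01 i) (hB01 j),
      integral_mul_eq_measureReal_inter_of_zero_or_one (hAmeas i) (hAmeas j) (hA01 i) (hA01 j),
      measureReal_eq_sum_sum_inter_fiber hZ₁meas hZ₂meas, measureReal_eq_sum_inter_fiber hZmeas,
      ← sum_sub_distrib]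
    refine sum_congr rfl fun g _ => ?_
    have hpull : ∑ k, a k ^ 2 * φ i g * φ j g * (π g * τ k)
        = φ i g * φ j g * (∑ k, a k ^ 2 * τ k) * π g := by
      rw [mul_sum, sum_mul]
      exact sum_congr rfl fun k _ => by ring
    simp only [measureReal_def, hpairA i j g hij, hpairB i j g _ hij, hpull, hmatch]
    ring
  rw [variance_sum_sub_variance_sum_of_zero_or_one hAmeas hBmeas hA01 hB01 hmean]
  simp only [filter_lt_eq_Ioi]
  exact congrArg _ <| sum_congr rfl fun i _ =>
    sum_congr rfl fun j hj => hsecond i j (mem_Ioi.1 hj).ne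

/-- Under the matching condition, Var(B) − Var(A)
  = 2 Σ_{i<j} Σ_g φ_{ig} φ_{jg} (Σ_k a_k² τ_k − (Σ_k a_k τ_k)²) π_g. -/
theorem lca_elca_variance_difference {N G K : ℕ}
    {Ω₁ Ω₂ : Type*} [MeasurableSpace Ω₁] [MeasurableSpace Ω₂]
    (μ₁ : Measure Ω₁) [IsProbabilityMeasure μ₁]
    (μ₂ : Measure Ω₂) [IsProbabilityMeasure μ₂]
    (Z : Ω₁ → Fin G) (A : Fin N → Ω₁ → ℝ)
    (Z₁ : Ω₂ → Fin G) (Z₂ : Ω₂ → Fin K) (B : Fin N → Ω₂ → ℝ)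
    (π : Fin G → ℝ) (τ : Fin K → ℝ) (a : Fin K → ℝ)
    (p : Fin N → Fin G → ℝ) (φ : Fin N → Fin G → ℝ)
    (hπ0 : ∀ g, 0 ≤ π g) (hπ1 : ∑ g, π g = 1)
    (hτ0 : ∀ k, 0 ≤ τ k) (hτ1 : ∑ k, τ k = 1)
    (ha : ∀ k, 0 < a k ∧ a k ≤ 1) (hφ : ∀ i g, 0 ≤ φ i g ∧ φ i g ≤ 1)
    (hmatch : ∀ i g, p i g = φ i g * ∑ k, a k * τ k)
    (hZmeas : Measurable Z) (hAmeas : ∀ i, Measurable (A i))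
    (hA01 : ∀ i ω, A i ω = 0 ∨ A i ω = 1)
    (hπA : ∀ g, (μ₁ {ω | Z ω = g}).toReal = π g)
    (hcondA : ∀ i g, (μ₁ ({ω | A i ω = 1} ∩ {ω | Z ω = g})).toReal = p i g * π g)
    (hpairA : ∀ i j g, i ≠ j →
      (μ₁ ({ω | A i ω = 1} ∩ {ω | A j ω = 1} ∩ {ω | Z ω = g})).toReal
        = p i g * p j g * π g)
    (hZ₁meas : Measurable Z₁) (hZ₂meas : Measurable Z₂) (hBmeas : ∀ i, Measurable (B i))
    (hB01 : ∀ i ω, B i ω = 0 ∨ B i ω = 1)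
    (hπB : ∀ g k, (μ₂ ({ω | Z₁ ω = g} ∩ {ω | Z₂ ω = k})).toReal = π g * τ k)
    (hcondB : ∀ i g k,
      (μ₂ ({ω | B i ω = 1} ∩ {ω | Z₁ ω = g} ∩ {ω | Z₂ ω = k})).toReal
        = a k * φ i g * (π g * τ k))
    (hpairB : ∀ i j g k, i ≠ j →
      (μ₂ ({ω | B i ω = 1} ∩ {ω | B j ω = 1} ∩ {ω | Z₁ ω = g} ∩ {ω | Z₂ ω = k})).toReal
        = (a k) ^ 2 * φ i g * φ j g * (π g * τ k)) :
    variance (fun ω => ∑ i, B i ω) μ₂ - variance (fun ω => ∑ i, A i ω) μ₁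
      = 2 * ∑ i, ∑ j ∈ Finset.univ.filter (fun j => i < j), ∑ g,
          φ i g * φ j g * (∑ k, (a k) ^ 2 * τ k - (∑ k, a k * τ k) ^ 2) * π g :=
  lca_elca_variance_difference_general μ₁ μ₂ Z A Z₁ Z₂ B π τ a p φ hmatch hZmeas hAmeas hA01 hcondA
    hpairA hZ₁meas hZ₂meas hBmeas hB01 hcondB hpairB
end

section
/- Consider the ELCA model with G clusters and K additional clusters where, for each N, Σ_{i=1}^N φ_{ig} a_k → λ^{(g,k)} > 0 and Σ_{i=1}^N φ_{ig}² a_k² → 0 as N → ∞ for all g, k. Let h_N(y) be the pmf of the hyperedge size. Then for each fixed y ∈ ℕ, h_N(y) → Σ_{g=1}^G Σ_{k=1}^K π_g τ_k e^{−λ^{(g,k)}} (λ^{(g,k)})^y / y!. -/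
open Filter

/-! Conditionally on the labels `(g, k)` the hyperedge size is Poisson binomial with success
probabilities `p i = a k * φ i g`, so it suffices to prove the Poisson limit theorem for Poisson
binomial laws with `∑ p → λ` and `∑ p² → 0`; note `max p ≤ √(∑ p²) → 0`. Write the pmf at `y` as
`∑_{|T| = y} ∏_T p * ∏_{Tᶜ} (1 - p)`. Each factor `∏_{Tᶜ} (1 - p)` lies between `∏ (1 - p)` and
`exp (-∑ p + y * max p)`, and both bounds tend to `e^{-λ}`. The elementary symmetric sums satisfy
`(y + 1) e_{y+1} = (∑ p) e_y - R` with `0 ≤ R ≤ y * max p * e_y`, whence `e_y → λ^y / y!`. -/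

/-- The probability mass function of a Poisson binomial distribution. -/
noncomputable def poissonBinomialPMF (N : ℕ) (p : Fin N → ℝ) (y : ℕ) : ℝ :=
  ∑ T ∈ Finset.powersetCard y (Finset.univ : Finset (Fin N)),
    (∏ i ∈ T, p i) * ∏ i ∈ Tᶜ, (1 - p i)

open Finset

section ElementarySymmetric

variable {ι : Type*} [Fintype ι]

noncomputable def elemSymm (p : ι → ℝ) (y : ℕ) : ℝ :=
  ∑ T ∈ powersetCard y univ, ∏ i ∈ T, p i

@[simp]
lemma elemSymm_zero (p : ι → ℝ) : elemSymm p 0 = 1 := by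
  simp [elemSymm]

lemma sum_powersetCard_sum_compl_prod_insert [DecidableEq ι] (p : ι → ℝ) (y : ℕ) :
    ∑ T ∈ powersetCard y univ, ∑ i ∈ Tᶜ, ∏ j ∈ insert i T, p j =
      (y + 1) * elemSymm p (y + 1) := by
  have hpairs : ∑ T ∈ powersetCard y univ, ∑ i ∈ Tᶜ, ∏ j ∈ insert i T, p j =
      ∑ U ∈ powersetCard (y + 1) univ, ∑ _i ∈ U, ∏ j ∈ U, p j := by
    rw [sum_sigma', sum_sigma']
    refine sum_nbij' (fun x => ⟨insert x.2 x.1, x.2⟩) (fun x => ⟨x.1.erase x.2, x.2⟩)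
      ?_ ?_ ?_ ?_ fun _ _ => rfl
    · rintro ⟨T, i⟩ h
      simp only [mem_sigma, mem_powersetCard, mem_compl] at h ⊢
      exact ⟨⟨subset_univ _, by rw [card_insert_of_notMem h.2, h.1.2]⟩, mem_insert_self _ _⟩
    · rintro ⟨U, i⟩ h
      simp only [mem_sigma, mem_powersetCard, mem_compl] at h ⊢
      exact ⟨⟨subset_univ _, by rw [card_erase_of_mem h.2, h.1.2]; rfl⟩, notMem_erase _ _⟩
    · rintro ⟨T, i⟩ h
      simp only [mem_sigma, mem_compl] at h
      simp [erase_insert h.2]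
    · rintro ⟨U, i⟩ h
      simp only [mem_sigma] at h
      simp [insert_erase h.2]
  rw [hpairs, elemSymm, mul_sum]
  refine sum_congr rfl fun U hU => ?_
  rw [sum_const, (mem_powersetCard.mp hU).2, nsmul_eq_mul]
  push_cast
  ring

/-- Multiplying `e_y` by `∑ p` produces every `(y+1)`-set `y+1` times, plus the terms whose new
index already lies in `T`. -/
lemma sum_mul_elemSymm (p : ι → ℝ) (y : ℕ) :
    (∑ i, p i) * elemSymm p y =
      (y + 1) * elemSymm p (y + 1) +
        ∑ T ∈ powersetCard y univ, (∏ i ∈ T, p i) * ∑ i ∈ T, p i := by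
  classical
  have hsplit : ∀ T : Finset ι, (∑ i, p i) * ∏ i ∈ T, p i =
      (∑ i ∈ Tᶜ, ∏ j ∈ insert i T, p j) + (∏ i ∈ T, p i) * ∑ i ∈ T, p i := by
    intro T
    have hinsert : ∑ i ∈ Tᶜ, ∏ j ∈ insert i T, p j = (∑ i ∈ Tᶜ, p i) * ∏ j ∈ T, p j := by
      rw [sum_mul]
      exact sum_congr rfl fun i hi => prod_insert (mem_compl.mp hi)
    rw [hinsert, ← sum_add_sum_compl T p]
    ring
  rw [elemSymm, mul_sum, sum_congr rfl fun T _ => hsplit T, sum_add_distrib,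
    sum_powersetCard_sum_compl_prod_insert]

end ElementarySymmetric

section PoissonLimit

open Real

lemma le_sqrt_sum_sq {ι : Type*} [Fintype ι] (p : ι → ℝ) (i : ι) : p i ≤ √(∑ j, p j ^ 2) :=
  (le_abs_self _).trans <| abs_le_sqrt <|
    single_le_sum (f := fun j => p j ^ 2) (fun j _ => sq_nonneg (p j)) (mem_univ i)

lemma sum_le_of_mem_powersetCard {ι : Type*} {p : ι → ℝ} {M : ℝ} (hM : ∀ i, p i ≤ M)
    {y : ℕ} {s T : Finset ι} (hT : T ∈ powersetCard y s) : ∑ i ∈ T, p i ≤ y * M := by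
  simpa [(mem_powersetCard.mp hT).2] using sum_le_card_nsmul T p M fun i _ => hM i

lemma sum_prod_mul_sum_le {ι : Type*} [Fintype ι] {p : ι → ℝ} (hp : ∀ i, 0 ≤ p i) {M : ℝ}
    (hM : ∀ i, p i ≤ M) (y : ℕ) :
    ∑ T ∈ powersetCard y univ, (∏ i ∈ T, p i) * ∑ i ∈ T, p i ≤ y * M * elemSymm p y := by
  rw [elemSymm, mul_sum]
  refine sum_le_sum fun T hT => ?_
  rw [mul_comm]
  exact mul_le_mul_of_nonneg_right (sum_le_of_mem_powersetCard hM hT)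
    (prod_nonneg fun i _ => hp i)

lemma exp_neg_add_two_mul_sq_le_one_sub {x : ℝ} (hx : x ≤ 1 / 2) :
    exp (-(x + 2 * x ^ 2)) ≤ 1 - x := by
  rw [exp_neg, inv_le_iff_one_le_mul₀ (exp_pos _)]
  nlinarith [add_one_le_exp (x + 2 * x ^ 2)]

lemma exp_neg_le_prod_one_sub {ι : Type*} {s : Finset ι} {p : ι → ℝ} (hp : ∀ i ∈ s, p i ≤ 1 / 2) :
    exp (-(∑ i ∈ s, p i + 2 * ∑ i ∈ s, p i ^ 2)) ≤ ∏ i ∈ s, (1 - p i) := by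
  rw [mul_sum, ← sum_add_distrib, ← sum_neg_distrib, exp_sum]
  exact prod_le_prod (fun i _ => (exp_pos _).le) fun i hi =>
    exp_neg_add_two_mul_sq_le_one_sub (hp i hi)

lemma prod_one_sub_le_exp_neg_sum {ι : Type*} {s : Finset ι} {p : ι → ℝ} (hp : ∀ i ∈ s, p i ≤ 1) :
    ∏ i ∈ s, (1 - p i) ≤ exp (-∑ i ∈ s, p i) := by
  rw [← sum_neg_distrib, exp_sum]
  exact prod_le_prod (fun i hi => sub_nonneg.2 (hp i hi)) fun i _ => one_sub_le_exp_neg _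

lemma prod_one_sub_mul_elemSymm_le_poissonBinomialPMF {N : ℕ} {p : Fin N → ℝ}
    (hp0 : ∀ i, 0 ≤ p i) (hp1 : ∀ i, p i ≤ 1) (y : ℕ) :
    (∏ i, (1 - p i)) * elemSymm p y ≤ poissonBinomialPMF N p y := by
  rw [elemSymm, mul_sum]
  refine sum_le_sum fun T _ => ?_
  rw [mul_comm]
  exact mul_le_mul_of_nonneg_left
    (prod_le_prod_of_subset_of_le_one (subset_univ _) (fun i _ => sub_nonneg.2 (hp1 i))
      fun i _ _ => sub_le_self _ (hp0 i))
    (prod_nonneg fun i _ => hp0 i)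

lemma poissonBinomialPMF_le_exp_mul_elemSymm {N : ℕ} {p : Fin N → ℝ}
    (hp0 : ∀ i, 0 ≤ p i) (hp1 : ∀ i, p i ≤ 1) {M : ℝ} (hM : ∀ i, p i ≤ M) (y : ℕ) :
    poissonBinomialPMF N p y ≤ exp (-∑ i, p i + y * M) * elemSymm p y := by
  rw [elemSymm, mul_sum]
  refine sum_le_sum fun T hT => ?_
  have hcompl : ∏ i ∈ Tᶜ, (1 - p i) ≤ exp (-∑ i, p i + y * M) := by
    refine (prod_one_sub_le_exp_neg_sum fun i _ => hp1 i).trans (exp_le_exp.2 ?_)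
    linarith [sum_add_sum_compl T p, sum_le_of_mem_powersetCard hM hT]
  exact (mul_le_mul_of_nonneg_left hcompl (prod_nonneg fun i _ => hp0 i)).trans_eq (mul_comm _ _)

section Limits

variable {α : Type*} {l : Filter α} {ι : α → Type*} [∀ a, Fintype (ι a)]
  {p : (a : α) → ι a → ℝ}

lemma tendsto_sqrt_sum_sq (hsq : Tendsto (fun a => ∑ i, p a i ^ 2) l (nhds 0)) :
    Tendsto (fun a => √(∑ i, p a i ^ 2)) l (nhds 0) := by
  simpa using hsq.sqrt

lemma eventually_forall_le_of_tendsto_sum_sq (hsq : Tendsto (fun a => ∑ i, p a i ^ 2) l (nhds 0))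
    {ε : ℝ} (hε : 0 < ε) : ∀ᶠ a in l, ∀ i, p a i ≤ ε := by
  filter_upwards [(tendsto_sqrt_sum_sq hsq).eventually (gt_mem_nhds hε)] with a ha i
  exact (le_sqrt_sum_sq (p a) i).trans ha.le

theorem tendsto_elemSymm {lam : ℝ} (hp : ∀ a i, 0 ≤ p a i)
    (hsum : Tendsto (fun a => ∑ i, p a i) l (nhds lam))
    (hsq : Tendsto (fun a => ∑ i, p a i ^ 2) l (nhds 0)) (y : ℕ) :
    Tendsto (fun a => elemSymm (p a) y) l (nhds (lam ^ y / y.factorial)) := by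
  induction y with
  | zero => simpa using tendsto_const_nhds
  | succ y ih =>
    set R : α → ℝ := fun a => ∑ T ∈ powersetCard y univ, (∏ i ∈ T, p a i) * ∑ i ∈ T, p a i
    have hR : Tendsto R l (nhds 0) := by
      have hbound : Tendsto (fun a => y * √(∑ i, p a i ^ 2) * elemSymm (p a) y) l (nhds 0) := by
        simpa using ((tendsto_sqrt_sum_sq hsq).const_mul (y : ℝ)).mul ih
      refine tendsto_of_tendsto_of_tendsto_of_le_of_le tendsto_const_nhds hbound
        (fun a => sum_nonneg fun T _ => mul_nonneg (prod_nonneg fun i _ => hp a i)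
          (sum_nonneg fun i _ => hp a i))
        (fun a => sum_prod_mul_sum_le (hp a) (le_sqrt_sum_sq (p a)) y)
    have hrec : ∀ a,
        elemSymm (p a) (y + 1) = ((∑ i, p a i) * elemSymm (p a) y - R a) / (y + 1) := by
      intro a
      rw [sum_mul_elemSymm]
      field_simp
      ring
    simp only [hrec]
    convert ((hsum.mul ih).sub hR).div_const ((y : ℝ) + 1) using 2
    rw [Nat.factorial_succ]
    push_cast
    field_simp
    ring

theorem tendsto_prod_one_sub {lam : ℝ} (hsum : Tendsto (fun a => ∑ i, p a i) l (nhds lam))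
    (hsq : Tendsto (fun a => ∑ i, p a i ^ 2) l (nhds 0)) :
    Tendsto (fun a => ∏ i, (1 - p a i)) l (nhds (exp (-lam))) := by
  have hlower : Tendsto (fun a => exp (-(∑ i, p a i + 2 * ∑ i, p a i ^ 2))) l
      (nhds (exp (-lam))) := by
    simpa using ((hsum.add (hsq.const_mul 2)).neg).rexp
  refine tendsto_of_tendsto_of_tendsto_of_le_of_le' hlower hsum.neg.rexp ?_ ?_ <;>
    filter_upwards [eventually_forall_le_of_tendsto_sum_sq hsq one_half_pos] with a ha
  · exact exp_neg_le_prod_one_sub fun i _ => ha i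
  · exact prod_one_sub_le_exp_neg_sum fun i _ => (ha i).trans one_half_lt_one.le

end Limits

theorem tendsto_poissonBinomialPMF {α : Type*} {l : Filter α} {N : α → ℕ}
    {p : (a : α) → Fin (N a) → ℝ} {lam : ℝ} (hp : ∀ a i, 0 ≤ p a i)
    (hsum : Tendsto (fun a => ∑ i, p a i) l (nhds lam))
    (hsq : Tendsto (fun a => ∑ i, p a i ^ 2) l (nhds 0)) (y : ℕ) :
    Tendsto (fun a => poissonBinomialPMF (N a) (p a) y) l
      (nhds (exp (-lam) * lam ^ y / y.factorial)) := by
  have hlimit : ∀ {c : α → ℝ}, Tendsto c l (nhds (exp (-lam))) →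
      Tendsto (fun a => c a * elemSymm (p a) y) l (nhds (exp (-lam) * lam ^ y / y.factorial)) :=
    fun hc => by simpa only [mul_div_assoc] using hc.mul (tendsto_elemSymm hp hsum hsq y)
  have hupper : Tendsto (fun a => exp (-∑ i, p a i + y * √(∑ i, p a i ^ 2))) l
      (nhds (exp (-lam))) := by
    simpa using (hsum.neg.add ((tendsto_sqrt_sum_sq hsq).const_mul (y : ℝ))).rexp
  refine tendsto_of_tendsto_of_tendsto_of_le_of_le' (hlimit (tendsto_prod_one_sub hsum hsq))
    (hlimit hupper) ?_ ?_ <;>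
    filter_upwards [eventually_forall_le_of_tendsto_sum_sq hsq one_pos] with a ha
  · exact prod_one_sub_mul_elemSymm_le_poissonBinomialPMF (hp a) ha y
  · exact poissonBinomialPMF_le_exp_mul_elemSymm (hp a) ha (le_sqrt_sum_sq (p a)) y

end PoissonLimit

theorem elca_size_poisson_mixture_limit_general {G K : ℕ}
    (π : Fin G → ℝ) (τ : Fin K → ℝ) (a : Fin K → ℝ)
    (φ : (N : ℕ) → Fin N → Fin G → ℝ) (lam : Fin G → Fin K → ℝ)
    (hincl : ∀ N i g k, a k * φ N i g ∈ Set.Icc (0 : ℝ) 1)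
    (hmean : ∀ g k, Tendsto (fun N => ∑ i, φ N i g * a k) atTop (nhds (lam g k)))
    (hsq : ∀ g k, Tendsto (fun N => ∑ i, (φ N i g) ^ 2 * (a k) ^ 2) atTop (nhds 0)) :
    ∀ y : ℕ,
      Tendsto
        (fun N => ∑ g, ∑ k, π g * τ k * poissonBinomialPMF N (fun i => a k * φ N i g) y)
        atTop
        (nhds (∑ g, ∑ k,
          π g * τ k * (Real.exp (-lam g k) * (lam g k) ^ y / (Nat.factorial y)))) := by
  intro y
  refine tendsto_finsetSum _ fun g _ => tendsto_finsetSum _ fun k _ => .const_mul _ ?_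
  refine tendsto_poissonBinomialPMF (N := fun N => N) (fun N i => (hincl N i g k).1) ?_ ?_ y
  · simpa only [mul_comm] using hmean g k
  · simpa only [mul_pow, mul_comm] using hsq g k

/-- Proposition 2(2): the hyperedge size pmf of the ELCA model converges to a
(G × K)-component Poisson mixture. -/
theorem elca_size_poisson_mixture_limit {G K : ℕ}
    (π : Fin G → ℝ) (τ : Fin K → ℝ) (a : Fin K → ℝ)
    (φ : (N : ℕ) → Fin N → Fin G → ℝ) (lam : Fin G → Fin K → ℝ)
    (hπ0 : ∀ g, 0 ≤ π g) (hπ1 : ∑ g, π g = 1)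
    (hτ0 : ∀ k, 0 ≤ τ k) (hτ1 : ∑ k, τ k = 1)
    (hincl : ∀ N i g k, a k * φ N i g ∈ Set.Icc (0 : ℝ) 1)
    (hlam : ∀ g k, 0 < lam g k)
    (hmean : ∀ g k, Tendsto (fun N => ∑ i, φ N i g * a k) atTop (nhds (lam g k)))
    (hsq : ∀ g k, Tendsto (fun N => ∑ i, (φ N i g) ^ 2 * (a k) ^ 2) atTop (nhds 0)) :
    ∀ y : ℕ,
      Tendsto
        (fun N => ∑ g, ∑ k, π g * τ k * poissonBinomialPMF N (fun i => a k * φ N i g) y)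
        atTop
        (nhds (∑ g, ∑ k,
          π g * τ k * (Real.exp (-lam g k) * (lam g k) ^ y / (Nat.factorial y)))) :=
  elca_size_poisson_mixture_limit_general π τ a φ lam hincl hmean hsq
end

section
/- For 0 < a < 1 and x, x₀ ∈ [0, 1] with a·x < 1 and a·x₀ < 1, the inequality log(1 − a x) ≥ log(1 − a x₀) + (−a/(1 − a x₀))(x − x₀) + (1/2)(−a²/(1−a)²)(x − x₀)² holds. -/
/-!
Adding `a² / (2 (1 - a)²) y²` to `f y = log (1 - a y)` makes it convex on `y ≤ 1`: its derivative
`-a / (1 - a y) + a² / (1 - a)² y` is monotone there, because the increments of `a / (1 - a y)`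
are `a² (z - y) / ((1 - a y)(1 - a z))` and both factors in the denominator are at least `1 - a`.
The tangent line of this convex function at `x₀` then lies below it, which is the claim.
-/

open Set

namespace ConvexOn

variable {S : Set ℝ} {f : ℝ → ℝ} {x y f' : ℝ}

theorem add_mul_sub_le_of_hasDerivAt (hfc : ConvexOn ℝ S f) (hx : x ∈ S) (hy : y ∈ S)
    (hf : HasDerivAt f f' x) : f x + f' * (y - x) ≤ f y := by
  rcases lt_trichotomy x y with hxy | rfl | hyx
  · have h := hfc.le_slope_of_hasDerivAt hx hy hxy hf
    rw [slope_def_field, le_div_iff₀ (sub_pos.2 hxy)] at h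
    linarith
  · simp
  · have h := hfc.slope_le_of_hasDerivAt hy hx hyx hf
    rw [slope_def_field, div_le_iff₀ (sub_pos.2 hyx)] at h
    linarith

end ConvexOn

theorem add_deriv_mul_sub_sub_sq_le_of_monotoneOn {S : Set ℝ} (hS : Convex ℝ S)
    {f f' : ℝ → ℝ} {L x y : ℝ} (hf : ∀ z ∈ S, HasDerivAt f (f' z) z)
    (hmono : MonotoneOn (fun z => f' z + L * z) S) (hx : x ∈ S) (hy : y ∈ S) :
    f x + f' x * (y - x) - L / 2 * (y - x) ^ 2 ≤ f y := by
  set g : ℝ → ℝ := fun z => f z + L / 2 * z ^ 2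
  have hg : ∀ z ∈ S, HasDerivAt g (f' z + L * z) z := fun z hz => by
    refine ((hf z hz).add ((hasDerivAt_pow 2 z).const_mul (L / 2))).congr_deriv ?_
    norm_num
    ring
  have hg_convex : ConvexOn ℝ S g := by
    refine MonotoneOn.convexOn_of_deriv hS
      (fun z hz => (hg z hz).continuousAt.continuousWithinAt)
      (fun z hz => (hg z (interior_subset hz)).differentiableAt.differentiableWithinAt) ?_
    refine (hmono.mono interior_subset).congr fun z hz => ?_
    exact ((hg z (interior_subset hz)).deriv).symm
  have := hg_convex.add_mul_sub_le_of_hasDerivAt hx hy (hg x hx)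
  simp only [g] at this
  linarith

theorem hasDerivAt_log_one_sub_mul {a y : ℝ} (hy : a * y < 1) :
    HasDerivAt (fun z => Real.log (1 - a * z)) (-a / (1 - a * y)) y := by
  have h := (((hasDerivAt_id' y).const_mul a).const_sub 1).log (by linarith)
  simpa [neg_div] using h

theorem monotoneOn_neg_div_one_sub_mul_add {a : ℝ} (ha0 : 0 ≤ a) (ha1 : a < 1) :
    MonotoneOn (fun z => -a / (1 - a * z) + a ^ 2 / (1 - a) ^ 2 * z) (Iic 1) := by
  intro y hy z hz hyz
  have hy' : 1 - a ≤ 1 - a * y := by nlinarith [mem_Iic.1 hy]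
  have hz' : 1 - a ≤ 1 - a * z := by nlinarith [mem_Iic.1 hz]
  have hprod : (1 - a) ^ 2 ≤ (1 - a * y) * (1 - a * z) := by nlinarith
  have hy0 : 1 - a * y ≠ 0 := by linarith
  have hz0 : 1 - a * z ≠ 0 := by linarith
  have hincr : a / (1 - a * z) - a / (1 - a * y)
      = a ^ 2 * (z - y) / ((1 - a * y) * (1 - a * z)) := by
    field_simp
    ring
  have hbound : a ^ 2 * (z - y) / ((1 - a * y) * (1 - a * z)) ≤ a ^ 2 * (z - y) / (1 - a) ^ 2 :=
    div_le_div_of_nonneg_left (by nlinarith) (by positivity) hprod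
  simp only [neg_div]
  have hcoef : a ^ 2 / (1 - a) ^ 2 * z - a ^ 2 / (1 - a) ^ 2 * y
      = a ^ 2 * (z - y) / (1 - a) ^ 2 := by ring
  linarith

theorem log_minorization_phi_general (a x x₀ : ℝ) (ha0 : 0 < a) (ha1 : a < 1)
    (hx : x ∈ Set.Icc (0 : ℝ) 1) (hx₀ : x₀ ∈ Set.Icc (0 : ℝ) 1) :
    Real.log (1 - a * x) ≥ Real.log (1 - a * x₀)
      + (-a / (1 - a * x₀)) * (x - x₀)
      + (1 / 2) * (-a ^ 2 / (1 - a) ^ 2) * (x - x₀) ^ 2 := by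
  have hderiv : ∀ z ∈ Iic (1 : ℝ), HasDerivAt (fun z => Real.log (1 - a * z))
      (-a / (1 - a * z)) z := fun z hz =>
    hasDerivAt_log_one_sub_mul (by nlinarith [mem_Iic.1 hz])
  have h := add_deriv_mul_sub_sub_sq_le_of_monotoneOn (convex_Iic 1) hderiv
    (monotoneOn_neg_div_one_sub_mul_add ha0.le ha1) (mem_Iic.2 hx₀.2) (mem_Iic.2 hx.2)
  rw [ge_iff_le]
  convert h using 2
  ring

/-- Quadratic minorization bound for log(1 − a x) used in the MM update of φ. -/
theorem log_minorization_phi (a x x₀ : ℝ) (ha0 : 0 < a) (ha1 : a < 1)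
    (hx : x ∈ Set.Icc (0 : ℝ) 1) (hx₀ : x₀ ∈ Set.Icc (0 : ℝ) 1)
    (hax : a * x < 1) (hax₀ : a * x₀ < 1) :
    Real.log (1 - a * x) ≥ Real.log (1 - a * x₀)
      + (-a / (1 - a * x₀)) * (x - x₀)
      + (1 / 2) * (-a ^ 2 / (1 - a) ^ 2) * (x - x₀) ^ 2 :=
  log_minorization_phi_general a x x₀ ha0 ha1 hx hx₀
end
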